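/- Let X be a real N×T matrix with singular value decomposition X = V S Wᵀ, where V is an N×N orthogonal matrix, W is a T×T orthogonal matrix, and S is the N×T rectangular diagonal matrix whose j-th diagonal entry is the j-th singular value s_j(X) (in decreasing order). For μ > 0, let S̃(μ) be the N×T rectangular diagonal matrix with j-th diagonal entry max{s_j(X) − μ, 0}. Then Π*_μ = V S̃(μ) Wᵀ is the unique minimizer over Π ∈ ℝ^{N×T} of ½ ‖X − Π‖_F² + μ ‖Π‖_*. -/

import Mathlib

open scoped BigOperators

noncomputable section

/-- Frobenius inner product of two real `N × T` matrices. -/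
def finner {N T : ℕ} (A B : Matrix (Fin N) (Fin T) ℝ) : ℝ :=
  ∑ i, ∑ t, A i t * B i t

/-- Frobenius norm of a real `N × T` matrix. -/
def fnorm {N T : ℕ} (A : Matrix (Fin N) (Fin T) ℝ) : ℝ :=
  Real.sqrt (finner A A)

/-- The `j`-th singular value (0-indexed, in decreasing order) of a real `N × T` matrix:
the square root of the `j`-th largest eigenvalue of `A * Aᵀ`; `0` for `j ≥ N`. -/
def sval {N T : ℕ} (A : Matrix (Fin N) (Fin T) ℝ) (j : ℕ) : ℝ :=
  if h : j < N then
    Real.sqrt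
      ((Matrix.isHermitian_mul_conjTranspose_self A).eigenvalues
        (Tuple.sort ((Matrix.isHermitian_mul_conjTranspose_self A).eigenvalues)
          ((⟨j, h⟩ : Fin N).rev)))
  else 0

/-- Spectral norm: the largest singular value. -/
def s1 {N T : ℕ} (A : Matrix (Fin N) (Fin T) ℝ) : ℝ := sval A 0

/-- Nuclear norm: the sum of the singular values. -/
def nucNorm {N T : ℕ} (A : Matrix (Fin N) (Fin T) ℝ) : ℝ :=
  ∑ j ∈ Finset.range N, sval A j

/-!
The residual `X - Π*_μ = V min(S, μ) Wᵀ` has spectral norm at most `μ`, so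
`⟪X - Π*_μ, A⟫_F ≤ μ ‖A‖_*` for every `A`, with equality at `A = Π*_μ`: the residual is a
subgradient of `μ ‖·‖_*` at `Π*_μ`. Expanding the square then gives
`½‖X - Π‖_F² + μ‖Π‖_* ≥ ½‖X - Π*_μ‖_F² + μ‖Π*_μ‖_* + ½‖Π - Π*_μ‖_F²`.
-/

open Matrix

section Frobenius

variable {N T : ℕ}

lemma finner_self_nonneg (A : Matrix (Fin N) (Fin T) ℝ) : 0 ≤ finner A A :=
  Finset.sum_nonneg fun _ _ => Finset.sum_nonneg fun _ _ => mul_self_nonneg _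

lemma fnorm_sq (A : Matrix (Fin N) (Fin T) ℝ) : fnorm A ^ 2 = finner A A :=
  Real.sq_sqrt (finner_self_nonneg A)

lemma eq_zero_of_fnorm_eq_zero {A : Matrix (Fin N) (Fin T) ℝ} (h : fnorm A = 0) : A = 0 := by
  have hsum : ∑ i, ∑ t, A i t * A i t = 0 := by rw [← finner, ← fnorm_sq, h, sq, zero_mul]
  ext i t
  rw [Finset.sum_eq_zero_iff_of_nonneg fun i _ => Finset.sum_nonneg fun t _ =>
    mul_self_nonneg (A i t)] at hsum
  have hrow := hsum i (Finset.mem_univ i)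
  rw [Finset.sum_eq_zero_iff_of_nonneg fun t _ => mul_self_nonneg (A i t)] at hrow
  exact mul_self_eq_zero.mp (hrow t (Finset.mem_univ t))

lemma finner_eq_trace (A B : Matrix (Fin N) (Fin T) ℝ) : finner A B = trace (A * Bᵀ) := by
  simp [finner, trace, mul_apply]

lemma finner_sub_right (A B C : Matrix (Fin N) (Fin T) ℝ) :
    finner A (B - C) = finner A B - finner A C := by
  simp [finner, mul_sub, Finset.sum_sub_distrib]

lemma fnorm_sub_sq (A B : Matrix (Fin N) (Fin T) ℝ) :
    fnorm (A - B) ^ 2 = fnorm A ^ 2 - 2 * finner A B + fnorm B ^ 2 := by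
  simp only [fnorm_sq, finner, Matrix.sub_apply, Finset.mul_sum, ← Finset.sum_sub_distrib,
    ← Finset.sum_add_distrib]
  exact Finset.sum_congr rfl fun i _ => Finset.sum_congr rfl fun t _ => by ring

/-- Together `hsub` and `hP` give `φ A - φ P ≥ ⟪X - P, A - P⟫_F`, i.e. `X - P` is a subgradient
of `φ` at `P`. -/
theorem half_fnorm_sq_add_le_of_subgradient {X P : Matrix (Fin N) (Fin T) ℝ}
    (φ : Matrix (Fin N) (Fin T) ℝ → ℝ) (hsub : ∀ A, finner (X - P) A ≤ φ A)
    (hP : φ P ≤ finner (X - P) P) (P' : Matrix (Fin N) (Fin T) ℝ) :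
    1 / 2 * fnorm (X - P) ^ 2 + φ P + 1 / 2 * fnorm (P' - P) ^ 2 ≤
      1 / 2 * fnorm (X - P') ^ 2 + φ P' := by
  have hexpand := fnorm_sub_sq (X - P) (P' - P)
  rw [sub_sub_sub_cancel_right, finner_sub_right] at hexpand
  linarith [hsub P']

theorem isUniqueMinimizer_of_subgradient {X P : Matrix (Fin N) (Fin T) ℝ}
    (φ : Matrix (Fin N) (Fin T) ℝ → ℝ) (hsub : ∀ A, finner (X - P) A ≤ φ A)
    (hP : φ P ≤ finner (X - P) P) :
    (∀ P', 1 / 2 * fnorm (X - P) ^ 2 + φ P ≤ 1 / 2 * fnorm (X - P') ^ 2 + φ P') ∧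
    (∀ P', 1 / 2 * fnorm (X - P') ^ 2 + φ P' = 1 / 2 * fnorm (X - P) ^ 2 + φ P → P' = P) := by
  refine ⟨fun P' => ?_, fun P' heq => ?_⟩
  · linarith [half_fnorm_sq_add_le_of_subgradient φ hsub hP P', sq_nonneg (fnorm (P' - P))]
  · have hmargin := half_fnorm_sq_add_le_of_subgradient φ hsub hP P'
    have hzero : fnorm (P' - P) ^ 2 = 0 := by linarith [sq_nonneg (fnorm (P' - P))]
    exact sub_eq_zero.mp (eq_zero_of_fnorm_eq_zero (pow_eq_zero_iff two_ne_zero |>.mp hzero))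

end Frobenius

section RealMatrix

lemma transpose_mul_apply_le_sqrt_mul_sqrt {m n : Type*} [Fintype m] (B C : Matrix m n ℝ) (j : n) :
    (Bᵀ * C) j j ≤ √((Bᵀ * B) j j) * √((Cᵀ * C) j j) := by
  simpa [mul_apply, sq] using Real.sum_mul_le_sqrt_mul_sqrt Finset.univ (fun t => B t j)
    (fun t => C t j)

variable {n : Type*} [Fintype n]

lemma sum_sq_apply_eq_one [DecidableEq n] {Q : Matrix n n ℝ} (hQ : Qᵀ * Q = 1) (j : n) :
    ∑ i, Q i j ^ 2 = 1 := by
  simpa [mul_apply, sq] using congrFun (congrFun hQ j) j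

lemma transpose_mul_mul_apply_self (U M : Matrix n n ℝ) (j : n) :
    (Uᵀ * M * U) j j = Uᵀ j ⬝ᵥ (M *ᵥ Uᵀ j) := by
  simp only [mul_apply, transpose_apply, dotProduct, mulVec, Finset.sum_mul, Finset.mul_sum]
  rw [Finset.sum_comm]
  exact Finset.sum_congr rfl fun _ _ => Finset.sum_congr rfl fun _ _ => by ring

lemma dotProduct_mulVec_conj_diagonal_le [DecidableEq n] {V : Matrix n n ℝ} (hV : V * Vᵀ = 1)
    {g : n → ℝ} {c : ℝ} (hg : ∀ i, g i ≤ c) (x : n → ℝ) :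
    x ⬝ᵥ ((V * diagonal g * Vᵀ) *ᵥ x) ≤ c * (x ⬝ᵥ x) := by
  have hrot : ∀ M : Matrix n n ℝ, x ⬝ᵥ ((V * M * Vᵀ) *ᵥ x) = (Vᵀ *ᵥ x) ⬝ᵥ (M *ᵥ (Vᵀ *ᵥ x)) := by
    intro M
    rw [← mulVec_mulVec, ← mulVec_mulVec, dotProduct_mulVec, mulVec_transpose]
  calc x ⬝ᵥ ((V * diagonal g * Vᵀ) *ᵥ x)
      = ∑ i, g i * (Vᵀ *ᵥ x) i ^ 2 := by
        rw [hrot]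
        simp only [dotProduct, mulVec_diagonal]
        exact Finset.sum_congr rfl fun _ _ => by ring
    _ ≤ ∑ i, c * (Vᵀ *ᵥ x) i ^ 2 :=
        Finset.sum_le_sum fun i _ => mul_le_mul_of_nonneg_right (hg i) (sq_nonneg _)
    _ = c * (x ⬝ᵥ x) := by
        have hnorm := hrot 1
        rw [Matrix.mul_one, hV, one_mulVec, one_mulVec] at hnorm
        rw [← Finset.mul_sum, hnorm]
        simp only [dotProduct, sq]

lemma sum_mul_le_sqrt_sum_mul_sq {ι : Type*} (s : Finset ι) {w c : ι → ℝ} (hw : ∀ i, 0 ≤ w i)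
    (hw1 : ∑ i ∈ s, w i = 1) (hc : ∀ i, 0 ≤ c i) :
    ∑ i ∈ s, w i * c i ≤ √(∑ i ∈ s, w i * c i ^ 2) := by
  have h := Real.sum_sqrt_mul_sqrt_le s hw (fun i => mul_nonneg (hw i) (sq_nonneg (c i)))
  rwa [hw1, Real.sqrt_one, one_mul, Finset.sum_congr rfl fun i _ => by
    rw [← Real.sqrt_mul (hw i), ← mul_assoc, ← sq, Real.sqrt_mul (sq_nonneg _),
      Real.sqrt_sq (hw i), Real.sqrt_sq (hc i)]] at h

end RealMatrix

section NuclearNorm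

variable {N T : ℕ}

lemma nucNorm_eq_sum_sqrt_eigenvalues (A : Matrix (Fin N) (Fin T) ℝ) :
    nucNorm A = ∑ j, √((isHermitian_mul_conjTranspose_self A).eigenvalues j) := by
  set hA := isHermitian_mul_conjTranspose_self A
  rw [nucNorm, Finset.sum_range fun j => sval A j]
  simp only [sval, Fin.is_lt, dif_pos, Fin.eta]
  exact Equiv.sum_comp (Fin.revPerm.trans (Tuple.sort hA.eigenvalues)) fun k => √(hA.eigenvalues k)

lemma exists_orthogonal_spectral_nucNorm (A : Matrix (Fin N) (Fin T) ℝ) :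
    ∃ (U : Matrix (Fin N) (Fin N) ℝ) (e : Fin N → ℝ), Uᵀ * U = 1 ∧ U * Uᵀ = 1 ∧
      (∀ j, 0 ≤ e j) ∧ A * Aᵀ = U * diagonal e * Uᵀ ∧ nucNorm A = ∑ j, √(e j) := by
  set hA := isHermitian_mul_conjTranspose_self A
  set U : Matrix (Fin N) (Fin N) ℝ := ↑hA.eigenvectorUnitary
  have hU := hA.eigenvectorUnitary.2
  have hU₁ := mem_unitaryGroup_iff'.mp hU
  have hU₂ := mem_unitaryGroup_iff.mp hU
  have h := hA.spectral_theorem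
  rw [star_eq_conjTranspose, conjTranspose_eq_transpose_of_trivial U] at hU₁ hU₂
  rw [Unitary.conjStarAlgAut_apply, star_eq_conjTranspose,
    conjTranspose_eq_transpose_of_trivial U] at h
  refine ⟨U, hA.eigenvalues, hU₁, hU₂, eigenvalues_self_mul_conjTranspose_nonneg A, ?_,
    nucNorm_eq_sum_sqrt_eigenvalues A⟩
  rw [← conjTranspose_eq_transpose_of_trivial A]
  exact h

/-- `hG` says that `G` has spectral norm at most `μ`. Diagonalize `A Aᵀ = U diag(e) Uᵀ` and apply
Cauchy–Schwarz to each column of `Gᵀ U` and `Aᵀ U`. -/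
theorem finner_le_mul_nucNorm {G : Matrix (Fin N) (Fin T) ℝ} {μ : ℝ} (hμ : 0 ≤ μ)
    (hG : ∀ x, x ⬝ᵥ ((G * Gᵀ) *ᵥ x) ≤ μ ^ 2 * (x ⬝ᵥ x)) (A : Matrix (Fin N) (Fin T) ℝ) :
    finner G A ≤ μ * nucNorm A := by
  obtain ⟨U, e, hU, hU', -, hAA, hnuc⟩ := exists_orthogonal_spectral_nucNorm A
  have hgram : ∀ B C : Matrix (Fin N) (Fin T) ℝ, (Bᵀ * U)ᵀ * (Cᵀ * U) = Uᵀ * (B * Cᵀ) * U :=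
    fun B C => by simp only [transpose_mul, transpose_transpose, Matrix.mul_assoc]
  have htrace : finner G A = ∑ j, ((Gᵀ * U)ᵀ * (Aᵀ * U)) j j := by
    change _ = trace _
    rw [finner_eq_trace, hgram, trace_mul_comm _ U, ← Matrix.mul_assoc, hU', Matrix.one_mul]
  have hGcol : ∀ j, ((Gᵀ * U)ᵀ * (Gᵀ * U)) j j ≤ μ ^ 2 := by
    intro j
    have hunit : Uᵀ j ⬝ᵥ Uᵀ j = 1 := by
      simpa [dotProduct, sq] using sum_sq_apply_eq_one hU j
    rw [hgram, transpose_mul_mul_apply_self]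
    simpa [hunit] using hG (Uᵀ j)
  have hAcol : ∀ j, ((Aᵀ * U)ᵀ * (Aᵀ * U)) j j = e j := by
    intro j
    rw [hgram, hAA, Matrix.mul_assoc, Matrix.mul_assoc, hU, Matrix.mul_one, ← Matrix.mul_assoc,
      hU, Matrix.one_mul, diagonal_apply_eq]
  rw [htrace, hnuc, Finset.mul_sum]
  refine Finset.sum_le_sum fun j _ => (transpose_mul_apply_le_sqrt_mul_sqrt _ _ j).trans ?_
  rw [hAcol]
  exact mul_le_mul_of_nonneg_right ((Real.sqrt_le_sqrt (hGcol j)).trans_eq (Real.sqrt_sq hμ))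
    (Real.sqrt_nonneg _)

/-- For every orthonormal basis `(vᵢ)` (the columns of `V`), `‖A‖_* ≤ ∑ᵢ ‖Aᵀ vᵢ‖`: each
`‖Aᵀ vᵢ‖²` is a convex combination of the eigenvalues of `A Aᵀ`, and `√` is concave. -/
theorem nucNorm_le_sum_sqrt_diag (A : Matrix (Fin N) (Fin T) ℝ) {V : Matrix (Fin N) (Fin N) ℝ}
    (hV : Vᵀ * V = 1) : nucNorm A ≤ ∑ i, √((Vᵀ * (A * Aᵀ) * V) i i) := by
  obtain ⟨U, e, hU, hU', he, hAA, hnuc⟩ := exists_orthogonal_spectral_nucNorm A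
  set Q := Vᵀ * U
  have hQ : Qᵀ * Q = 1 := by
    rw [transpose_mul, transpose_transpose, Matrix.mul_assoc, ← Matrix.mul_assoc V,
      mul_eq_one_comm.mp hV, Matrix.one_mul, hU]
  have hQ' : Qᵀᵀ * Qᵀ = 1 := by
    rw [transpose_transpose, transpose_mul, transpose_transpose, Matrix.mul_assoc,
      ← Matrix.mul_assoc U, hU', Matrix.one_mul, hV]
  have hdiag : ∀ i, (Vᵀ * (A * Aᵀ) * V) i i = ∑ j, Q i j ^ 2 * √(e j) ^ 2 := by
    intro i
    have hconj : Vᵀ * (A * Aᵀ) * V = Q * diagonal e * Qᵀ := by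
      simp only [hAA, Q, transpose_mul, transpose_transpose, Matrix.mul_assoc]
    rw [hconj]
    simp only [mul_apply, diagonal_apply, transpose_apply, mul_ite, mul_zero,
      Finset.sum_ite_eq', Finset.mem_univ, if_true, Real.sq_sqrt (he _)]
    exact Finset.sum_congr rfl fun j _ => by ring
  calc nucNorm A = ∑ j, (∑ i, Q i j ^ 2) * √(e j) := by
        simp only [hnuc, sum_sq_apply_eq_one hQ, one_mul]
    _ = ∑ i, ∑ j, Q i j ^ 2 * √(e j) := by
        simp only [Finset.sum_mul]
        exact Finset.sum_comm
    _ ≤ ∑ i, √((Vᵀ * (A * Aᵀ) * V) i i) := Finset.sum_le_sum fun i _ => by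
        rw [hdiag]
        exact sum_mul_le_sqrt_sum_mul_sq _ (fun j => sq_nonneg _) (sum_sq_apply_eq_one hQ' i)
          fun j => Real.sqrt_nonneg _

end NuclearNorm

section RectangularDiagonal

variable {N T : ℕ}

def rectDiag (N T : ℕ) (d : ℕ → ℝ) : Matrix (Fin N) (Fin T) ℝ :=
  of fun i t => if (i : ℕ) = t then d i else 0

lemma rectDiag_sub (d e : ℕ → ℝ) :
    rectDiag N T (d - e) = rectDiag N T d - rectDiag N T e := by
  ext i t
  simp only [rectDiag, of_apply, Matrix.sub_apply, Pi.sub_apply]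
  split_ifs <;> simp

lemma sum_ite_val_eq (k : ℕ) (c : ℝ) :
    ∑ t : Fin T, (if k = (t : ℕ) then c else 0) = if k < T then c else 0 := by
  rw [Fin.sum_univ_eq_sum_range (fun t => if k = t then c else 0), Finset.sum_ite_eq]
  simp only [Finset.mem_range]

lemma rectDiag_mul_transpose_rectDiag (d e : ℕ → ℝ) :
    rectDiag N T d * (rectDiag N T e)ᵀ =
      diagonal fun i : Fin N => if (i : ℕ) < T then d i * e i else 0 := by
  ext i k
  rw [mul_apply]
  simp only [transpose_apply, rectDiag, of_apply, ite_zero_mul_ite_zero]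
  by_cases hik : i = k
  · subst hik
    simpa only [and_self, diagonal_apply_eq] using sum_ite_val_eq _ _
  · rw [diagonal_apply_ne _ hik]
    refine Finset.sum_eq_zero fun t _ => if_neg fun h => hik (Fin.ext (h.1.trans h.2.symm))

end RectangularDiagonal

section Conjugation

variable {N T : ℕ} {V : Matrix (Fin N) (Fin N) ℝ} {W : Matrix (Fin T) (Fin T) ℝ}

lemma conj_mul_transpose_conj (hW : Wᵀ * W = 1) (A B : Matrix (Fin N) (Fin T) ℝ) :
    V * A * Wᵀ * (V * B * Wᵀ)ᵀ = V * (A * Bᵀ) * Vᵀ := by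
  simp only [transpose_mul, transpose_transpose, Matrix.mul_assoc]
  rw [← Matrix.mul_assoc Wᵀ W, hW, Matrix.one_mul]

theorem finner_conj_rectDiag_le_mul_nucNorm (hV : Vᵀ * V = 1) (hW : Wᵀ * W = 1) {d : ℕ → ℝ}
    {μ : ℝ} (hμ : 0 ≤ μ) (hd : ∀ j, |d j| ≤ μ) (A : Matrix (Fin N) (Fin T) ℝ) :
    finner (V * rectDiag N T d * Wᵀ) A ≤ μ * nucNorm A := by
  refine finner_le_mul_nucNorm hμ (fun x => ?_) A
  rw [conj_mul_transpose_conj hW, rectDiag_mul_transpose_rectDiag]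
  refine dotProduct_mulVec_conj_diagonal_le (mul_eq_one_comm.mp hV) (fun i => ?_) x
  split_ifs
  · rw [← sq]
    exact sq_le_sq' (abs_le.mp (hd i)).1 (abs_le.mp (hd i)).2
  · positivity

theorem mul_nucNorm_conj_rectDiag_le_finner (hV : Vᵀ * V = 1) (hW : Wᵀ * W = 1)
    {d m : ℕ → ℝ} {μ : ℝ} (hμ : 0 ≤ μ) (hm : ∀ j, 0 ≤ m j) (hdm : ∀ j, d j * m j = μ * m j) :
    μ * nucNorm (V * rectDiag N T m * Wᵀ) ≤
      finner (V * rectDiag N T d * Wᵀ) (V * rectDiag N T m * Wᵀ) := by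
  have hgram : Vᵀ * (V * rectDiag N T m * Wᵀ * (V * rectDiag N T m * Wᵀ)ᵀ) * V =
      diagonal fun i : Fin N => if (i : ℕ) < T then m i * m i else 0 := by
    rw [conj_mul_transpose_conj hW, rectDiag_mul_transpose_rectDiag, ← Matrix.mul_assoc,
      ← Matrix.mul_assoc, hV, Matrix.one_mul, Matrix.mul_assoc, hV, Matrix.mul_one]
  have hfinner : finner (V * rectDiag N T d * Wᵀ) (V * rectDiag N T m * Wᵀ) =
      ∑ i : Fin N, μ * if (i : ℕ) < T then m i else 0 := by
    rw [finner_eq_trace, conj_mul_transpose_conj hW, trace_mul_comm, ← Matrix.mul_assoc, hV,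
      Matrix.one_mul, rectDiag_mul_transpose_rectDiag, trace_diagonal]
    simp only [hdm, mul_ite, mul_zero]
  calc μ * nucNorm (V * rectDiag N T m * Wᵀ)
      ≤ μ * ∑ i : Fin N, √(if (i : ℕ) < T then m i * m i else 0) := by
        have hnuc := nucNorm_le_sum_sqrt_diag (V * rectDiag N T m * Wᵀ) hV
        simp only [hgram, diagonal_apply_eq] at hnuc
        exact mul_le_mul_of_nonneg_left hnuc hμ
    _ = finner (V * rectDiag N T d * Wᵀ) (V * rectDiag N T m * Wᵀ) := by
        rw [hfinner, Finset.mul_sum]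
        refine Finset.sum_congr rfl fun i _ => ?_
        split_ifs
        · rw [Real.sqrt_mul_self (hm i)]
        · rw [Real.sqrt_zero]

end Conjugation

lemma sval_nonneg {N T : ℕ} (A : Matrix (Fin N) (Fin T) ℝ) (j : ℕ) : 0 ≤ sval A j := by
  unfold sval
  split_ifs
  exacts [Real.sqrt_nonneg _, le_rfl]

open Matrix in
/-- Singular-value soft-thresholding: given an SVD `X = V S Wᵀ`, the matrix
`Π*_μ = V S̃(μ) Wᵀ` (with singular values soft-thresholded at `μ`) is the unique minimizer of
`½‖X − Π‖_F² + μ‖Π‖_*`. -/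
theorem soft_thresholding_unique_minimizer {N T : ℕ}
    (X : Matrix (Fin N) (Fin T) ℝ)
    (V : Matrix (Fin N) (Fin N) ℝ) (W : Matrix (Fin T) (Fin T) ℝ)
    (S : Matrix (Fin N) (Fin T) ℝ)
    (hV : Vᵀ * V = 1) (hW : Wᵀ * W = 1)
    (hS : ∀ (i : Fin N) (t : Fin T), S i t = if (i : ℕ) = (t : ℕ) then sval X (i : ℕ) else 0)
    (hX : X = V * S * Wᵀ)
    (μ : ℝ) (hμ : 0 < μ)
    (Stil : Matrix (Fin N) (Fin T) ℝ)
    (hStil : ∀ (i : Fin N) (t : Fin T),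
      Stil i t = if (i : ℕ) = (t : ℕ) then max (sval X (i : ℕ) - μ) 0 else 0) :
    (∀ Pi' : Matrix (Fin N) (Fin T) ℝ,
        (1 / 2) * (fnorm (X - V * Stil * Wᵀ)) ^ 2 + μ * nucNorm (V * Stil * Wᵀ) ≤
        (1 / 2) * (fnorm (X - Pi')) ^ 2 + μ * nucNorm Pi') ∧
    (∀ Pi' : Matrix (Fin N) (Fin T) ℝ,
        (1 / 2) * (fnorm (X - Pi')) ^ 2 + μ * nucNorm Pi' =
        (1 / 2) * (fnorm (X - V * Stil * Wᵀ)) ^ 2 + μ * nucNorm (V * Stil * Wᵀ) →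
        Pi' = V * Stil * Wᵀ) := by
  have hS' : S = rectDiag N T (sval X) := Matrix.ext hS
  have hStil' : Stil = rectDiag N T fun j => max (sval X j - μ) 0 := Matrix.ext hStil
  have hresidual : X - V * Stil * Wᵀ = V * rectDiag N T (fun j => min (sval X j) μ) * Wᵀ := by
    conv_lhs => rw [hX]
    rw [← Matrix.sub_mul, ← Matrix.mul_sub, hS', hStil', ← rectDiag_sub]
    congr 3
    funext j
    rcases le_total (sval X j) μ with h | h <;> simp [h]
  refine isUniqueMinimizer_of_subgradient (fun A => μ * nucNorm A) (fun A => ?_) ?_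
  · rw [hresidual]
    refine finner_conj_rectDiag_le_mul_nucNorm hV hW hμ.le (fun j => ?_) A
    rw [abs_of_nonneg (le_min (sval_nonneg X j) hμ.le)]
    exact min_le_right _ _
  · rw [hresidual, hStil']
    refine mul_nucNorm_conj_rectDiag_le_finner hV hW hμ.le (fun j => le_max_right _ _) fun j => ?_
    rcases le_total (sval X j) μ with h | h <;> simp [h]

end
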